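/- arXiv:2505.10018 — 2 statements merged into one kernel-verified Lean document; each statement's English description precedes it below -/
import Mathlib

section
/- Let X be a topological space, let n be a positive integer, and let A : X → Mat_{n×n}(ℝ) be a continuous matrix-valued function such that A(x) is symmetric for every x ∈ X. For each x, list the (necessarily real) eigenvalues of A(x) in nondecreasing order with multiplicity as λ_1(x) ≤ λ_2(x) ≤ ⋯ ≤ λ_n(x). Then for every i ∈ {1,…,n}, the eigenvalue function x ↦ λ_i(x) is continuous on X. -/
/-!
Near a point `x₀` the tuples `ev x` stay in a compact set, since eigenvalues are bounded by a
matrix norm of `A x`. Any cluster point `v` of `ev` at `x₀` is sorted and, by continuity of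
`x ↦ det (t - A x) = ∏ k, (t - ev x k)`, has the same polynomial `∏ k, (t - v k)` as `ev x₀`,
hence the same multiset of entries; a sorted tuple is determined by that multiset, so `v = ev x₀`.
A unique cluster point in a compact set is a limit.
-/

open Filter Topology Polynomial Finset

theorem Monotone.eq_of_map_univ_val_eq {α : Type*} [LinearOrder α] {n : ℕ} {v w : Fin n → α}
    (hv : Monotone v) (hw : Monotone w) (h : univ.val.map v = univ.val.map w) : v = w := by
  refine List.ofFn_injective (List.Perm.eq_of_sortedLE hv.sortedLE_ofFn hw.sortedLE_ofFn ?_)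
  rwa [← Multiset.coe_eq_coe, ← Fin.univ_val_map, ← Fin.univ_val_map]

theorem map_univ_val_eq_of_forall_prod_sub_eq {R ι : Type*} [CommRing R] [IsDomain R] [Infinite R]
    [Fintype ι] {v w : ι → R} (h : ∀ t, ∏ k, (t - v k) = ∏ k, (t - w k)) :
    univ.val.map v = univ.val.map w := by
  have hpoly : ∏ k, (X - C (v k)) = ∏ k, (X - C (w k)) :=
    Polynomial.funext fun t => by simpa [eval_prod] using h t
  have hroots (u : ι → R) : (∏ k, (X - C (u k))).roots = univ.val.map u := by
    rw [← roots_multiset_prod_X_sub_C (univ.val.map u), Multiset.map_map]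
    rfl
  rw [← hroots, hpoly, hroots]

theorem Matrix.det_scalar_sub_eq_prod_of_charpoly_roots_eq {R ι : Type*} [CommRing R] [IsDomain R]
    [Fintype ι] [DecidableEq ι] {M : Matrix ι ι R} {v : ι → R}
    (h : M.charpoly.roots = univ.val.map v) (t : R) :
    (scalar ι t - M).det = ∏ k, (t - v k) := by
  have hsplit : M.charpoly.Splits := by
    rw [splits_iff_card_roots, h, charpoly_natDegree_eq_dim]; simp
  rw [← eval_charpoly, hsplit.eval_eq_prod_roots_of_monic M.charpoly_monic, h, Multiset.map_map]
  rfl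

section
attribute [local instance] Matrix.linftyOpNormedRing Matrix.linftyOpNormedAlgebra

theorem ContinuousAt.exists_eventually_norm_le_of_isRoot_charpoly {X 𝕜 ι : Type*}
    [TopologicalSpace X] [RCLike 𝕜] [Fintype ι] [DecidableEq ι] {A : X → Matrix ι ι 𝕜} {x₀ : X}
    (hA : ContinuousAt A x₀) :
    ∃ C, ∀ᶠ x in 𝓝 x₀, ∀ μ, (A x).charpoly.IsRoot μ → ‖μ‖ ≤ C := by
  refine ⟨(‖A x₀‖ + 1) * ‖(1 : Matrix ι ι 𝕜)‖, ?_⟩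
  filter_upwards [hA.norm.eventually_lt continuousAt_const (lt_add_one _)] with x hx μ hμ
  calc ‖μ‖ ≤ ‖A x‖ * ‖(1 : Matrix ι ι 𝕜)‖ := mem_closedBall_zero_iff.1 <|
        spectrum.subset_closedBall_norm_mul _ (Matrix.mem_spectrum_of_isRoot_charpoly hμ)
    _ ≤ (‖A x₀‖ + 1) * ‖(1 : Matrix ι ι 𝕜)‖ := by gcongr

end

theorem tendsto_of_monotone_of_tendsto_prod_sub {ι : Type*} {n : ℕ} {l : Filter ι}
    {ev : ι → Fin n → ℝ} {v₀ : Fin n → ℝ} (hv₀ : Monotone v₀) (hmono : ∀ᶠ i in l, Monotone (ev i))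
    (hbdd : ∃ C, ∀ᶠ i in l, ∀ k, ‖ev i k‖ ≤ C)
    (hprod : ∀ t, Tendsto (fun i => ∏ k, (t - ev i k)) l (𝓝 (∏ k, (t - v₀ k)))) :
    Tendsto ev l (𝓝 v₀) := by
  obtain ⟨C, hC⟩ := hbdd
  refine (isCompact_univ_pi fun _ => isCompact_closedBall 0 C).tendsto_nhds_of_unique_mapClusterPt
    (by simpa using hC) fun v _ hv => ?_
  refine (isClosed_monotone.mem_of_mapClusterPt hv hmono).eq_of_map_univ_val_eq hv₀
    (map_univ_val_eq_of_forall_prod_sub_eq fun t => ?_)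
  have hcont : Continuous fun w : Fin n → ℝ => ∏ k, (t - w k) := by fun_prop
  exact eq_of_nhds_neBot ((hv.continuousAt_comp hcont.continuousAt).clusterPt.mono (hprod t))

theorem continuous_sorted_eigenvalues_general {X : Type*} [TopologicalSpace X]
    (n : ℕ) (A : X → Matrix (Fin n) (Fin n) ℝ)
    (hA_cont : Continuous A)
    (ev : X → Fin n → ℝ)
    (hev_sorted : ∀ x, Monotone (ev x))
    (hev_roots : ∀ x, (Matrix.charpoly (A x)).roots
        = Multiset.map (ev x) Finset.univ.val) :
    ∀ i : Fin n, Continuous fun x => ev x i := by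
  have hev_cont : Continuous ev := continuous_iff_continuousAt.2 fun x₀ => by
    obtain ⟨C, hC⟩ := hA_cont.continuousAt.exists_eventually_norm_le_of_isRoot_charpoly (x₀ := x₀)
    refine tendsto_of_monotone_of_tendsto_prod_sub (hev_sorted x₀) (.of_forall hev_sorted)
      ⟨C, hC.mono fun x hx k => hx _ (isRoot_of_mem_roots ?_)⟩ fun t => ?_
    · rw [hev_roots]
      exact Multiset.mem_map_of_mem _ (mem_univ k)
    · simp_rw [← Matrix.det_scalar_sub_eq_prod_of_charpoly_roots_eq (hev_roots _)]
      exact ((continuous_const.sub hA_cont).matrix_det).tendsto x₀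
  exact fun i => (continuous_apply i).comp hev_cont

/-- **Continuity of ordered eigenvalue functions of a continuous symmetric
matrix-valued function.**
Let `X` be a topological space, `n` a positive integer, and `A : X → Mat_{n×n}(ℝ)`
a continuous map such that `A x` is symmetric for every `x`.  Suppose
`ev : X → Fin n → ℝ` lists, for each `x`, the eigenvalues of `A x` (i.e. the real
roots of its characteristic polynomial, with multiplicity) in nondecreasing
order.  Then each function `x ↦ ev x i` is continuous on `X`. -/
theorem continuous_sorted_eigenvalues {X : Type*} [TopologicalSpace X]
    (n : ℕ) (hn : 0 < n) (A : X → Matrix (Fin n) (Fin n) ℝ)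
    (hA_cont : Continuous A) (hA_symm : ∀ x, (A x).IsSymm)
    (ev : X → Fin n → ℝ)
    (hev_sorted : ∀ x, Monotone (ev x))
    (hev_roots : ∀ x, (Matrix.charpoly (A x)).roots
        = Multiset.map (ev x) Finset.univ.val) :
    ∀ i : Fin n, Continuous fun x => ev x i :=
  continuous_sorted_eigenvalues_general n A hA_cont ev hev_sorted hev_roots
end

section
/- Fix a positive integer n, and consider monic real polynomials of degree n all of whose n roots (counted with multiplicity) are real. If a sequence of such polynomials converges to another such polynomial in the sense that each coefficient converges, then for every i ∈ {1,…,n} the i-th smallest root (counted with multiplicity) of the sequence of polynomials converges to the i-th smallest root of the limit polynomial. -/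
/-!
The roots of a monic real-rooted polynomial are bounded in terms of its coefficients (Cauchy's
bound), so the sorted root vectors of the `p k` stay in a compact set. Any cluster point `t` of
them is again sorted, and since the coefficients of `∏ i, (X - C (t i))` depend continuously on
`t`, it is a root vector of `q`. A sorted listing of a multiset is unique, so `t = s`: the sequence
has a single cluster point in a compact set, hence converges to it.
-/

open Filter Topology Polynomial

namespace Polynomial

lemma Monic.norm_lt_of_isRoot {K : Type*} [NormedDivisionRing K] {p : K[X]} (hp : p.Monic)
    {a : K} (ha : p.IsRoot a) : ‖a‖ < 1 + ∑ j ∈ Finset.range p.natDegree, ‖p.coeff j‖ := by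
  have hsup : (Finset.range p.natDegree).sup (‖p.coeff ·‖₊) ≤
      ∑ j ∈ Finset.range p.natDegree, ‖p.coeff j‖₊ :=
    Finset.sup_le fun j hj => Finset.single_le_sum (f := (‖p.coeff ·‖₊)) (fun _ _ => zero_le) hj
  have hcauchy := ha.norm_lt_cauchyBound hp.ne_zero
  rw [cauchyBound, hp.leadingCoeff, nnnorm_one, div_one, add_comm] at hcauchy
  have hbound : ‖a‖₊ < 1 + ∑ j ∈ Finset.range p.natDegree, ‖p.coeff j‖₊ :=
    hcauchy.trans_le (by gcongr)
  rw [← NNReal.coe_lt_coe] at hbound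
  simpa using hbound

variable {ι R : Type*} [Fintype ι]

lemma continuous_coeff_prod_X_sub_C [CommRing R] [TopologicalSpace R] [IsTopologicalRing R]
    (k : ℕ) : Continuous fun v : ι → R => (∏ i, (X - C (v i))).coeff k := by
  by_cases hk : k ≤ Fintype.card ι
  · simp_rw [sub_eq_add_neg, ← C_neg, Finset.prod_X_add_C_coeff _ _ hk]
    fun_prop
  · have hdeg (v : ι → R) : (∏ i, (X - C (v i))).natDegree ≤ Fintype.card ι :=
      (natDegree_prod_le _ _).trans <| by
        simpa using Finset.sum_le_sum fun i (_ : i ∈ Finset.univ) => natDegree_X_sub_C_le (v i)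
    simp_rw [coeff_eq_zero_of_natDegree_lt ((hdeg _).trans_lt (not_le.mp hk))]
    exact continuous_const

variable [CommRing R] [IsDomain R]

lemma roots_prod_X_sub_C_eq_map (v : ι → R) :
    (∏ i, (X - C (v i))).roots = Finset.univ.val.map v := by
  rw [Finset.prod_eq_multiset_prod, ← roots_multiset_prod_X_sub_C (Finset.univ.val.map v),
    Multiset.map_map]
  rfl

lemma Monic.eq_prod_X_sub_C_of_roots_eq_map {p : R[X]} (hp : p.Monic)
    (hdeg : p.natDegree = Fintype.card ι) {v : ι → R}
    (hroots : p.roots = Finset.univ.val.map v) : p = ∏ i, (X - C (v i)) := by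
  have hcard : Multiset.card p.roots = p.natDegree := by simp [hroots, hdeg]
  rw [← prod_multiset_X_sub_C_of_monic_of_roots_card_eq hp hcard, hroots, Multiset.map_map,
    Finset.prod_eq_multiset_prod]
  rfl

end Polynomial

lemma eq_of_monotone_of_map_univ_eq {α : Type*} [LinearOrder α] {n : ℕ} {f g : Fin n → α}
    (hf : Monotone f) (hg : Monotone g)
    (h : Finset.univ.val.map f = Finset.univ.val.map g) : f = g := by
  rw [Fin.univ_val_map, Fin.univ_val_map] at h
  exact List.ofFn_injective
    (List.Perm.eq_of_sortedLE hf.sortedLE_ofFn hg.sortedLE_ofFn (Multiset.coe_eq_coe.mp h))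

lemma MapClusterPt.eq_of_tendsto {X α : Type*} [TopologicalSpace X] [T2Space X] {F : Filter α}
    {u : α → X} {x y : X} (hx : MapClusterPt x F u) (hy : Tendsto u F (𝓝 y)) : x = y :=
  eq_of_nhds_neBot (ClusterPt.mono hx hy)

lemma norm_le_one_add_sum_norm_coeff_prod_X_sub_C {ι K : Type*} [Fintype ι] [NormedField K]
    (v : ι → K) :
    ‖v‖ ≤ 1 + ∑ j ∈ Finset.range (Fintype.card ι), ‖(∏ i, (X - C (v i))).coeff j‖ := by
  have hmonic : (∏ i, (X - C (v i))).Monic := monic_prod_of_monic _ _ fun i _ => monic_X_sub_C _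
  refine (pi_norm_le_iff_of_nonneg (by positivity)).mpr fun i => ?_
  have hroot : (∏ i, (X - C (v i))).IsRoot (v i) := by
    rw [IsRoot.def, eval_prod]
    exact Finset.prod_eq_zero (Finset.mem_univ i) (by simp)
  simpa using (hmonic.norm_lt_of_isRoot hroot).le

theorem tendsto_of_tendsto_coeff_prod_X_sub_C {ι : Type*} {l : Filter ι} {n : ℕ}
    {v : ι → Fin n → ℝ} {w : Fin n → ℝ} {q : ℝ[X]} (hv : ∀ k, Monotone (v k))
    (hw : Monotone w)
    (hcoeff : ∀ j, Tendsto (fun k => (∏ i, (X - C (v k i))).coeff j) l (𝓝 (q.coeff j)))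
    (hq : q.roots = Finset.univ.val.map w) : Tendsto v l (𝓝 w) := by
  obtain ⟨M, hM⟩ : ∃ M, ∀ᶠ k in l, v k ∈ Metric.closedBall 0 M := by
    have hsum : Tendsto (fun k => 1 + ∑ j ∈ Finset.range n, ‖(∏ i, (X - C (v k i))).coeff j‖) l
        (𝓝 (1 + ∑ j ∈ Finset.range n, ‖q.coeff j‖)) :=
      tendsto_const_nhds.add (tendsto_finsetSum _ fun j _ => (hcoeff j).norm)
    obtain ⟨M, hM⟩ := hsum.isBoundedUnder_le
    refine ⟨M, (eventually_map.mp hM).mono fun k hk => ?_⟩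
    rw [mem_closedBall_zero_iff]
    simpa using (norm_le_one_add_sum_norm_coeff_prod_X_sub_C (v k)).trans (by simpa using hk)
  refine (isCompact_closedBall 0 M).tendsto_nhds_of_unique_mapClusterPt hM fun t _ ht => ?_
  have ht_mono : Monotone t := isClosed_monotone.mem_of_mapClusterPt ht (.of_forall hv)
  have hqt : q = ∏ i, (X - C (t i)) := ext fun j =>
    ((ht.continuousAt_comp (continuous_coeff_prod_X_sub_C j).continuousAt).eq_of_tendsto
      (hcoeff j)).symm
  exact eq_of_monotone_of_map_univ_eq ht_mono hw (by rw [← hq, hqt, roots_prod_X_sub_C_eq_map])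

theorem sorted_roots_continuous_in_coefficients_general
    (n : ℕ)
    (p : ℕ → Polynomial ℝ) (q : Polynomial ℝ)
    (hp_monic : ∀ k, (p k).Monic)
    (hp_deg : ∀ k, (p k).natDegree = n)
    (hcoeff : ∀ j : ℕ, Tendsto (fun k => (p k).coeff j) atTop (𝓝 (q.coeff j)))
    (r : ℕ → Fin n → ℝ) (s : Fin n → ℝ)
    (hr_sorted : ∀ k, Monotone (r k)) (hs_sorted : Monotone s)
    (hr_roots : ∀ k, (p k).roots = Multiset.map (r k) Finset.univ.val)
    (hs_roots : q.roots = Multiset.map s Finset.univ.val) :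
    ∀ i : Fin n, Tendsto (fun k => r k i) atTop (𝓝 (s i)) := by
  have hp (k : ℕ) : p k = ∏ i, (X - C (r k i)) :=
    (hp_monic k).eq_prod_X_sub_C_of_roots_eq_map (by simpa using hp_deg k) (hr_roots k)
  have hr : Tendsto r atTop (𝓝 s) :=
    tendsto_of_tendsto_coeff_prod_X_sub_C hr_sorted hs_sorted
      (fun j => (hcoeff j).congr fun k => by rw [hp k]) hs_roots
  exact fun i => tendsto_pi_nhds.mp hr i

/-- **Continuous dependence of ordered real roots on coefficients.**
Fix `n > 0`.  Let `p k` be a sequence of monic real polynomials of degree `n`,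
each having all `n` roots real (counted with multiplicity), and let `q` be
another such polynomial.  Suppose every coefficient of `p k` converges to the
corresponding coefficient of `q`.  If `r k : Fin n → ℝ` lists the roots of
`p k` in nondecreasing order with multiplicity, and `s : Fin n → ℝ` does the
same for `q`, then for every `i`, `r k i → s i` as `k → ∞`. -/
theorem sorted_roots_continuous_in_coefficients
    (n : ℕ) (hn : 0 < n)
    (p : ℕ → Polynomial ℝ) (q : Polynomial ℝ)
    (hp_monic : ∀ k, (p k).Monic) (hq_monic : q.Monic)
    (hp_deg : ∀ k, (p k).natDegree = n) (hq_deg : q.natDegree = n)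
    (hcoeff : ∀ j : ℕ, Tendsto (fun k => (p k).coeff j) atTop (𝓝 (q.coeff j)))
    (r : ℕ → Fin n → ℝ) (s : Fin n → ℝ)
    (hr_sorted : ∀ k, Monotone (r k)) (hs_sorted : Monotone s)
    (hr_roots : ∀ k, (p k).roots = Multiset.map (r k) Finset.univ.val)
    (hs_roots : q.roots = Multiset.map s Finset.univ.val) :
    ∀ i : Fin n, Tendsto (fun k => r k i) atTop (𝓝 (s i)) :=
  sorted_roots_continuous_in_coefficients_general n p q hp_monic hp_deg hcoeff r s hr_sorted
    hs_sorted hr_roots hs_roots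
end
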